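/- For the planar system Σ' = -Σ(1 - 2A - C₂(Σ² - A²)), A' = A(1 + 2Σ + C₂(Σ² - A²)) with parameter C₂ > 0, the point (Σ,A) = (0, 1/√C₂) is an equilibrium whose Jacobian has eigenvalues 2/√C₂ - 2 and -2; hence it is a hyperbolic saddle when 0 < C₂ < 1, non-hyperbolic when C₂ = 1, and a hyperbolic sink when C₂ > 1. -/

import Mathlib

/-!
At a point `(0, a)` with `C₂ a² = 1` the Jacobian of the field is lower triangular with diagonal
`(2a - 2, -2)`, so these are its eigenvalues; for `a = 1/√C₂` the sign of `2a - 2` is that of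
`1 - C₂`.
-/

noncomputable section

/-- Extreme-tilt (v = -1) planar vector field:
`Σ' = -Σ(1 - 2A - C₂(Σ² - A²))`, `A' = A(1 + 2Σ + C₂(Σ² - A²))`. -/
def Fminus (C₂ : ℝ) : ℝ × ℝ → ℝ × ℝ := fun p =>
  (-p.1 * (1 - 2 * p.2 - C₂ * (p.1 ^ 2 - p.2 ^ 2)),
    p.2 * (1 + 2 * p.1 + C₂ * (p.1 ^ 2 - p.2 ^ 2)))

open ContinuousLinearMap Module.End

def matrixCLM₂ (a b c d : ℝ) : ℝ × ℝ →L[ℝ] ℝ × ℝ :=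
  (a • fst ℝ ℝ ℝ + b • snd ℝ ℝ ℝ).prod (c • fst ℝ ℝ ℝ + d • snd ℝ ℝ ℝ)

@[simp]
theorem matrixCLM₂_apply (a b c d : ℝ) (v : ℝ × ℝ) :
    matrixCLM₂ a b c d v = (a * v.1 + b * v.2, c * v.1 + d * v.2) := rfl

theorem hasEigenvalue_matrixCLM₂_lower_right (a c d : ℝ) :
    HasEigenvalue (matrixCLM₂ a 0 c d).toLinearMap d :=
  hasEigenvalue_of_hasEigenvector (x := (0, 1))
    ⟨mem_eigenspace_iff.2 (by simp), by simp⟩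

theorem hasEigenvalue_matrixCLM₂_lower_left (a c d : ℝ) :
    HasEigenvalue (matrixCLM₂ a 0 c d).toLinearMap a := by
  rcases eq_or_ne a d with rfl | had
  · exact hasEigenvalue_matrixCLM₂_lower_right a c a
  · refine hasEigenvalue_of_hasEigenvector (x := (a - d, c))
      ⟨mem_eigenspace_iff.2 ?_, by simp [sub_eq_zero, had]⟩
    simp only [coe_coe, matrixCLM₂_apply, Prod.smul_mk, smul_eq_mul, Prod.mk.injEq]
    constructor <;> ring

theorem hasFDerivAt_Fminus (C₂ : ℝ) (p : ℝ × ℝ) :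
    HasFDerivAt (Fminus C₂)
      (matrixCLM₂ (C₂ * (3 * p.1 ^ 2 - p.2 ^ 2) + 2 * p.2 - 1) (2 * p.1 - 2 * C₂ * p.1 * p.2)
        (2 * p.2 + 2 * C₂ * p.1 * p.2) (1 + 2 * p.1 + C₂ * (p.1 ^ 2 - 3 * p.2 ^ 2))) p := by
  have hx : HasFDerivAt (fun q : ℝ × ℝ => q.1) (fst ℝ ℝ ℝ) p := hasFDerivAt_fst
  have hy : HasFDerivAt (fun q : ℝ × ℝ => q.2) (snd ℝ ℝ ℝ) p := hasFDerivAt_snd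
  have hq := ((hx.pow 2).sub (hy.pow 2)).const_mul C₂
  have h := (hx.neg.mul (((hasFDerivAt_const 1 p).sub (hy.const_mul 2)).sub hq)).prodMk
    (hy.mul (((hasFDerivAt_const 1 p).add (hx.const_mul 2)).add hq))
  refine h.congr_fderiv (ContinuousLinearMap.ext fun v => ?_)
  simp only [matrixCLM₂_apply, ContinuousLinearMap.prod_apply, add_apply, sub_apply, neg_apply,
    smul_apply, zero_apply, coe_fst', coe_snd', smul_eq_mul, nsmul_eq_mul, Pi.neg_apply,
    Pi.add_apply, Pi.sub_apply]
  ext <;> ring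

theorem Fminus_zero_left_eq_zero (C₂ a : ℝ) (h : C₂ * a ^ 2 = 1) : Fminus C₂ (0, a) = 0 := by
  simp only [Fminus, Prod.mk_eq_zero]
  constructor
  · ring
  · linear_combination -a * h

theorem fderiv_Fminus_zero_left (C₂ a : ℝ) (h : C₂ * a ^ 2 = 1) :
    fderiv ℝ (Fminus C₂) (0, a) = matrixCLM₂ (2 * a - 2) 0 (2 * a) (-2) := by
  rw [(hasFDerivAt_Fminus C₂ (0, a)).fderiv]
  congr 1
  · linear_combination -h
  · ring
  · ring
  · linear_combination -3 * h

theorem two_div_sqrt_sub_two_pos_iff {C : ℝ} (hC : 0 < C) : 0 < 2 / √C - 2 ↔ C < 1 := by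
  rw [sub_pos, lt_div_iff₀ (Real.sqrt_pos.2 hC), mul_lt_iff_lt_one_right two_pos,
    Real.sqrt_lt' one_pos, one_pow]

theorem two_div_sqrt_sub_two_neg_iff {C : ℝ} (hC : 0 < C) : 2 / √C - 2 < 0 ↔ 1 < C := by
  rw [sub_neg, div_lt_iff₀ (Real.sqrt_pos.2 hC), lt_mul_iff_one_lt_right two_pos,
    Real.lt_sqrt zero_le_one, one_pow]

/-- The point `(Σ, A) = (0, 1/√C₂)` is an equilibrium of the v = -1 extreme-tilt
system whose Jacobian has the eigenvalues `2/√C₂ - 2` and `-2`; hence it is a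
hyperbolic saddle for `0 < C₂ < 1`, non-hyperbolic for `C₂ = 1`, and a hyperbolic
sink for `C₂ > 1`. -/
theorem P6_stability (C₂ : ℝ) (hC : 0 < C₂) :
    Fminus C₂ (0, 1 / Real.sqrt C₂) = 0 ∧
    Module.End.HasEigenvalue
      ((fderiv ℝ (Fminus C₂) (0, 1 / Real.sqrt C₂)).toLinearMap)
      (2 / Real.sqrt C₂ - 2) ∧
    Module.End.HasEigenvalue
      ((fderiv ℝ (Fminus C₂) (0, 1 / Real.sqrt C₂)).toLinearMap) (-2) ∧
    (C₂ < 1 → 0 < 2 / Real.sqrt C₂ - 2) ∧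
    (C₂ = 1 → 2 / Real.sqrt C₂ - 2 = 0) ∧
    (1 < C₂ → 2 / Real.sqrt C₂ - 2 < 0) := by
  have hA : C₂ * (1 / √C₂) ^ 2 = 1 := by
    rw [div_pow, Real.sq_sqrt hC.le]
    field_simp
  have hμ : 2 / √C₂ - 2 = 2 * (1 / √C₂) - 2 := by ring
  refine ⟨Fminus_zero_left_eq_zero C₂ _ hA, ?_, ?_, (two_div_sqrt_sub_two_pos_iff hC).2,
    by rintro rfl; norm_num, (two_div_sqrt_sub_two_neg_iff hC).2⟩
  · rw [fderiv_Fminus_zero_left C₂ _ hA, hμ]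
    exact hasEigenvalue_matrixCLM₂_lower_left _ _ _
  · rw [fderiv_Fminus_zero_left C₂ _ hA]
    exact hasEigenvalue_matrixCLM₂_lower_right _ _ _
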